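/- Two binary strings u, v of length k are adjacent under the one-dimensional Euclidean m-pattern if and only if their binary values (as natural numbers, reading the string as a base-2 numeral with a=0, b=1) differ by exactly 1. -/
import Mathlib

/-- Base-2 value of a binary string (`0 = a`, `1 = b`). -/
def valList : List (Fin 2) → ℕ :=
  List.foldl (fun n d => 2 * n + d.val) 0

/-- The one-dimensional Euclidean m-pattern adjacency, defined inductively:
`x.a` and `x.b` are adjacent; and if `x.b` and `y.a` are adjacent then, depending on
which one is lexicographically (equivalently, value-wise) smaller, `x.b.b` and `y.a.a`
(resp. `y.a.b` and `x.b.a`) are adjacent. -/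
inductive EAdj : List (Fin 2) → List (Fin 2) → Prop where
  | step (x : List (Fin 2)) : EAdj (x ++ [0]) (x ++ [1])
  | symm {u v : List (Fin 2)} : EAdj u v → EAdj v u
  | mergeLt (x y : List (Fin 2)) :
      EAdj (x ++ [1]) (y ++ [0]) → valList (x ++ [1]) < valList (y ++ [0]) →
      EAdj (x ++ [1] ++ [1]) (y ++ [0] ++ [0])
  | mergeGt (x y : List (Fin 2)) :
      EAdj (x ++ [1]) (y ++ [0]) → valList (y ++ [0]) < valList (x ++ [1]) →
      EAdj (y ++ [0] ++ [1]) (x ++ [1] ++ [0])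

lemma valList_append (x : List (Fin 2)) (d : Fin 2) :
    valList (x ++ [d]) = 2 * valList x + d.val := by
  simp [valList, List.foldl_append]

lemma val_inj : ∀ (x y : List (Fin 2)), x.length = y.length → valList x = valList y → x = y := by
  intro x
  induction x using List.reverseRecOn with
  | nil =>
    intro y hl _
    exact (List.eq_nil_of_length_eq_zero hl.symm).symm
  | append_singleton x d ih =>
    intro y hl hv
    obtain rfl | ⟨y', e, rfl⟩ := y.eq_nil_or_concat
    · simp at hl
    · simp only [List.concat_eq_append] at *
      rw [valList_append, valList_append] at hv
      have hd := d.is_lt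
      have he := e.is_lt
      have h1 : d.val = e.val ∧ valList x = valList y' := by omega
      have hxy : x = y' := ih y' (by simpa using hl) h1.2
      subst hxy
      have : d = e := Fin.ext h1.1
      subst this
      rfl

lemma forward {u v : List (Fin 2)} (h : EAdj u v) :
    valList u + 1 = valList v ∨ valList v + 1 = valList u := by
  induction h with
  | step x => left; simp [valList_append]
  | symm _ ih => exact ih.symm
  | mergeLt x y _ hlt ih =>
    rw [valList_append, valList_append]
    rw [valList_append, valList_append] at *
    omega
  | mergeGt x y _ hlt ih =>
    rw [valList_append, valList_append]
    rw [valList_append, valList_append] at *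
    omega

lemma adj_succ : ∀ (k : ℕ) (u v : List (Fin 2)), u.length = k → v.length = k →
    valList v = valList u + 1 → EAdj u v := by
  intro k
  induction k using Nat.strong_induction_on with
  | _ k ih =>
    intro u v hu hv hval
    obtain rfl | ⟨x, d, rfl⟩ := u.eq_nil_or_concat
    · obtain rfl : v = [] := List.eq_nil_of_length_eq_zero (hv.trans hu.symm)
      simp [valList] at hval
    · obtain rfl | ⟨y, e, rfl⟩ := v.eq_nil_or_concat
      · simp at hu hv; omega
      · simp only [List.concat_eq_append] at *
        have hlen : x.length = y.length := by
          simp at hu hv; omega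
        rw [valList_append, valList_append] at hval
        have hd := d.is_lt
        have he := e.is_lt
        interval_cases dv : d.val <;> interval_cases ev : e.val
        · omega
        · -- d = 0, e = 1
          have hde : d = 0 := Fin.ext dv
          have hee : e = 1 := Fin.ext ev
          have hxy : x = y := val_inj x y hlen (by omega)
          subst hxy; subst hde; subst hee
          exact EAdj.step x
        · -- d = 1, e = 0 : valList y = valList x + 1
          have hde : d = 1 := Fin.ext dv
          have hee : e = 0 := Fin.ext ev
          subst hde; subst hee
          have hval' : valList y = valList x + 1 := by omega
          obtain rfl | ⟨x', c, rfl⟩ := x.eq_nil_or_concat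
          · obtain rfl : y = [] := List.eq_nil_of_length_eq_zero hlen.symm
            simp [valList] at hval'
          · obtain rfl | ⟨y', f, rfl⟩ := y.eq_nil_or_concat
            all_goals simp only [List.concat_eq_append] at *
            · simp at hlen
            · have hlen' : x'.length = y'.length := by simp at hlen; omega
              rw [valList_append, valList_append] at hval'
              have hc := c.is_lt
              have hf := f.is_lt
              interval_cases cv : c.val <;> interval_cases fv : f.val
              · omega
              · -- c = 0, f = 1 : use mergeGt
                have hcc : c = 0 := Fin.ext cv
                have hff : f = 1 := Fin.ext fv
                have hxy : x' = y' := val_inj x' y' hlen' (by omega)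
                subst hxy; subst hcc; subst hff
                refine EAdj.mergeGt x' x' (EAdj.symm (EAdj.step x')) ?_
                rw [valList_append, valList_append]; simp
              · -- c = 1, f = 0 : use mergeLt
                have hcc : c = 1 := Fin.ext cv
                have hff : f = 0 := Fin.ext fv
                subst hcc; subst hff
                have hk : x'.length + 1 < k := by simp at hu; omega
                have hadj : EAdj (x' ++ [1]) (y' ++ [0]) :=
                  ih (x'.length + 1) hk _ _ (by simp) (by simp [hlen'])
                    (by rw [valList_append, valList_append]; omega)
                refine EAdj.mergeLt x' y' hadj ?_
                rw [valList_append, valList_append]; omega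
              · omega
        · omega

/-- Two binary strings of length `k` are adjacent under the one-dimensional Euclidean
m-pattern iff their base-2 values differ by exactly 1. -/
theorem stmt_1 (k : ℕ) (u v : List (Fin 2)) (hu : u.length = k) (hv : v.length = k) :
    EAdj u v ↔ |(valList u : ℤ) - (valList v : ℤ)| = 1 := by
  constructor
  · intro h
    have := forward h
    rw [abs_eq (by norm_num : (0:ℤ) ≤ 1)]
    omega
  · intro h
    rw [abs_eq (by norm_num : (0:ℤ) ≤ 1)] at h
    rcases h with h | h
    · exact EAdj.symm (adj_succ k v u hv hu (by omega))
    · exact adj_succ k u v hu hv (by omega)
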